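/- arXiv:2107.05524 — 4 statements merged into one kernel-verified Lean document; each statement's English description precedes it below -/
import Mathlib

section
/- For odd a and any b in [0, 2^(k+1)), writing a = 2^k·i_k + a' with a' odd in [0,2^k), and b = 2b' + j_0 with j_0 ∈ {0,1}, one has a·b mod 2^(k+1) = (2·(a'·b' mod 2^k) + 2·δ(j_0=1)·⌊a/2⌋ + j_0) mod 2^(k+1), where δ(j_0=1) is 1 if j_0 = 1 and 0 otherwise. -/
/-- Recursive decomposition of modular multiplication by an odd number:
for odd `a` and any `b` in `[0, 2^(k+1))`, with `a' = a mod 2^k`, `b' = ⌊b/2⌋`,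
`j₀ = b mod 2`, one has
`a·b mod 2^(k+1) = (2·(a'·b' mod 2^k) + 2·δ(j₀=1)·⌊a/2⌋ + j₀) mod 2^(k+1)`. -/
theorem modular_mul_decomposition (k a b : ℕ) (hk : 1 ≤ k)
    (ha : a < 2 ^ (k + 1)) (hb : b < 2 ^ (k + 1)) (hodd : Odd a) :
    (a * b) % 2 ^ (k + 1) =
      (2 * ((a % 2 ^ k) * (b / 2) % 2 ^ k)
        + 2 * (if b % 2 = 1 then 1 else 0) * (a / 2) + b % 2) % 2 ^ (k + 1) := by
  have hm : (a % 2 ^ k) * (b / 2) % 2 ^ k = a * (b / 2) % 2 ^ k := by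
    rw [Nat.mul_mod, Nat.mod_mod_of_dvd _ (dvd_refl _), ← Nat.mul_mod]
  rw [hm]
  have h2 : 2 ^ (k + 1) = 2 * 2 ^ k := by ring
  have hb' : b = 2 * (b / 2) + b % 2 := (Nat.div_add_mod b 2).symm ▸ by omega
  have ha' : a = 2 * (a / 2) + 1 := by
    rcases hodd with ⟨c, hc⟩; omega
  have key : 2 * (a * (b / 2)) % (2 * 2 ^ k) = 2 * (a * (b / 2) % 2 ^ k) :=
    Nat.mul_mod_mul_left 2 _ _
  rcases Nat.mod_two_eq_zero_or_one b with h0 | h1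
  · simp only [h0]
    have : a * b = 2 * (a * (b / 2)) := by rw [mul_comm 2 (a * (b/2))]; nlinarith [hb'.symm]
    rw [this, h2, if_neg (by omega), key]
    have hlt := Nat.mod_lt (a * (b / 2)) (show 0 < 2 ^ k by positivity)
    simp only [mul_zero, zero_mul, add_zero]
    exact (Nat.mod_eq_of_lt (by omega)).symm
  · simp only [h1, if_pos rfl]
    have hab : a * b = 2 * (a * (b / 2)) + a := by nlinarith [hb'.symm]
    rw [hab, h2, Nat.add_mod, key, Nat.mod_eq_of_lt (show a < 2 * 2 ^ k by omega)]
    simp only [if_pos trivial]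
    congr 1
    omega
end

section
/- Fourier slice property of the PDRT: for a function f on (ℤ/nℤ)² with PDRT r_k(l) = (1/√n)·Σ_{(x,y): x+ky≡l mod n} f(x,y) (k ∈ [0,n)), the 1-D discrete Fourier transform of r_k in l equals the 2-D discrete Fourier transform of f evaluated at (ω, k·ω mod n): F₁{r_k}(ω) = F₂{f}(ω, kω mod n) for all ω ∈ [0,n). -/
open Complex Finset

/-- 1-D discrete Fourier transform on `ℤ/nℤ`, normalized by `1/√n`. -/
noncomputable def dft1 (n : ℕ) (g : ℕ → ℂ) (ω : ℕ) : ℂ :=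
  (1 / Real.sqrt n) * ∑ l ∈ Finset.range n,
    g l * Complex.exp (-2 * Real.pi * Complex.I * (l * ω) / n)

/-- 2-D discrete Fourier transform on `(ℤ/nℤ)²`, normalized by `1/n`. -/
noncomputable def dft2 (n : ℕ) (f : ZMod n × ZMod n → ℂ) (u v : ℕ) : ℂ :=
  (1 / (n : ℂ)) * ∑ x ∈ Finset.range n, ∑ y ∈ Finset.range n,
    f (x, y) * Complex.exp (-2 * Real.pi * Complex.I * (u * x + v * y) / n)

lemma exp_nat_mod (n : ℕ) (hn : 0 < n) (a : ℕ) :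
    Complex.exp (-2 * Real.pi * Complex.I * a / n) =
      Complex.exp (-2 * Real.pi * Complex.I * ((a % n : ℕ) : ℂ) / n) := by
  have hn' : (n : ℂ) ≠ 0 := Nat.cast_ne_zero.mpr hn.ne'
  obtain ⟨q, hq⟩ : ∃ q, a = a % n + n * q := ⟨a / n, (Nat.mod_add_div a n).symm⟩
  have h : (-2 * Real.pi * Complex.I * ((a % n + n * q : ℕ) : ℂ) / n) =
      (-2 * Real.pi * Complex.I * ((a % n : ℕ) : ℂ) / n) +
        ((-(q : ℤ) : ℤ) : ℂ) * (2 * Real.pi * Complex.I) := by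
    push_cast
    field_simp
    ring
  conv_lhs => rw [hq]
  rw [h, Complex.exp_add, Complex.exp_int_mul_two_pi_mul_I, mul_one]

/-- Fourier slice property of the PDRT: for `k ∈ [0,n)` and `ω ∈ [0,n)`,
`F₁{r_k}(ω) = F₂{f}(ω, kω mod n)`, where
`r_k(l) = (1/√n)·Σ_{(x,y) : x + k·y ≡ l mod n} f(x,y)`. -/
theorem pdrt_fourier_slice (n : ℕ) (hn : 0 < n) (f : ZMod n × ZMod n → ℂ)
    (r : ℕ → ℕ → ℂ)
    (hr : ∀ k l, r k l = (1 / Real.sqrt n) * ∑ x ∈ Finset.range n, ∑ y ∈ Finset.range n,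
      if (x + k * y) % n = l % n then f (x, y) else 0)
    (k ω : ℕ) (hk : k < n) (hω : ω < n) :
    dft1 n (r k) ω = dft2 n f ω ((k * ω) % n) := by
  have hn' : (n : ℂ) ≠ 0 := Nat.cast_ne_zero.mpr hn.ne'
  have key : ∑ l ∈ range n, (∑ x ∈ range n, ∑ y ∈ range n,
        if (x + k * y) % n = l % n then f (x, y) else 0) *
        Complex.exp (-2 * Real.pi * Complex.I * (l * ω) / n)
      = ∑ x ∈ range n, ∑ y ∈ range n,
        f (x, y) * Complex.exp (-2 * Real.pi * Complex.I * ((ω : ℂ) * x + (((k * ω) % n : ℕ) : ℂ) * y) / n) := by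
    have step1 : ∀ l ∈ range n, (∑ x ∈ range n, ∑ y ∈ range n,
        if (x + k * y) % n = l % n then f (x, y) else 0) *
        Complex.exp (-2 * Real.pi * Complex.I * (l * ω) / n)
        = ∑ x ∈ range n, ∑ y ∈ range n,
          if (x + k * y) % n = l % n then f (x, y) * Complex.exp (-2 * Real.pi * Complex.I * (l * ω) / n) else 0 := by
      intro l _
      rw [Finset.sum_mul]
      refine Finset.sum_congr rfl fun x _ => ?_
      rw [Finset.sum_mul]
      refine Finset.sum_congr rfl fun y _ => ?_
      split <;> simp
    rw [Finset.sum_congr rfl step1, Finset.sum_comm]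
    refine Finset.sum_congr rfl fun x _ => ?_
    rw [Finset.sum_comm]
    refine Finset.sum_congr rfl fun y _ => ?_
    have hmem : (x + k * y) % n ∈ range n := Finset.mem_range.mpr (Nat.mod_lt _ hn)
    rw [Finset.sum_eq_single ((x + k * y) % n)]
    · rw [if_pos (by simp [Nat.mod_mod_of_dvd])]
      have hmod : ((x + k * y) % n * ω) % n = (ω * x + ((k * ω) % n) * y) % n := by
        have h1 : (x + k * y) % n * ω ≡ (x + k * y) * ω [MOD n] :=
          (Nat.mod_modEq _ n).mul_right ω
        have h2 : ω * x + (k * ω) % n * y ≡ ω * x + (k * ω) * y [MOD n] :=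
          Nat.ModEq.add_left _ ((Nat.mod_modEq _ n).mul_right y)
        have h3 : (x + k * y) * ω = ω * x + (k * ω) * y := by ring
        rw [h3] at h1
        exact h1.trans h2.symm
      have e1 : ((((x + k * y) % n : ℕ) : ℂ) * (ω : ℂ)) = ((((x + k * y) % n) * ω : ℕ) : ℂ) := by
        push_cast; ring
      have e2 : ((ω : ℂ) * (x : ℂ) + (((k * ω) % n : ℕ) : ℂ) * (y : ℂ)) = ((ω * x + ((k * ω) % n) * y : ℕ) : ℂ) := by
        push_cast; ring
      rw [e1, e2, exp_nat_mod n hn, exp_nat_mod n hn (ω * x + ((k * ω) % n) * y), hmod]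
    · intro b hb hne
      rw [if_neg]
      rw [Nat.mod_eq_of_lt (Finset.mem_range.mp hb)]
      exact fun h => hne h.symm
    · exact fun h => absurd hmem h
  unfold dft1 dft2
  simp only [hr]
  have pull : ∑ l ∈ range n, ((1 / (Real.sqrt n : ℂ)) * ∑ x ∈ range n, ∑ y ∈ range n,
        (if (x + k * y) % n = l % n then f (x, y) else 0)) *
        Complex.exp (-2 * Real.pi * Complex.I * (l * ω) / n)
      = (1 / (Real.sqrt n : ℂ)) * ∑ l ∈ range n, (∑ x ∈ range n, ∑ y ∈ range n,
        (if (x + k * y) % n = l % n then f (x, y) else 0)) *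
        Complex.exp (-2 * Real.pi * Complex.I * (l * ω) / n) := by
    rw [Finset.mul_sum]
    exact Finset.sum_congr rfl fun l _ => by ring
  rw [pull, ← mul_assoc, key]
  have hsq : ((1 : ℂ) / Real.sqrt n) * (1 / Real.sqrt n) = 1 / (n : ℂ) := by
    have hs : ((Real.sqrt n : ℝ) : ℂ) * ((Real.sqrt n : ℝ) : ℂ) = (n : ℂ) := by
      rw [← Complex.ofReal_mul, Real.mul_self_sqrt (Nat.cast_nonneg n)]
      simp
    rw [div_mul_div_comm, one_mul, hs]
  rw [hsq]
end

section
/- Fourier slice property of PDRT at slope k = n: F₁{r_n}(ω) = F₂{f}(0, ω) for all ω ∈ [0,n), where r_n(l) = (1/√n)·Σ_{x∈[0,n)} f(x,l). -/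
open Complex Finset

/-- Fourier slice property of the PDRT at slope `k = n`:
`F₁{r_n}(ω) = F₂{f}(0, ω)` for all `ω ∈ [0,n)`, where
`r_n(l) = (1/√n)·Σ_{x ∈ [0,n)} f(x, l)`. -/
theorem pdrt_fourier_slice_horizontal (n : ℕ) (hn : 0 < n) (f : ZMod n × ZMod n → ℂ)
    (rn : ℕ → ℂ)
    (hr : ∀ l, rn l = (1 / Real.sqrt n) * ∑ x ∈ Finset.range n, f (x, l))
    (ω : ℕ) (hω : ω < n) :
    dft1 n rn ω = dft2 n f 0 ω := by
  have hs : ((Real.sqrt n : ℂ)) * (Real.sqrt n : ℂ) = (n : ℂ) := by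
    norm_cast
    exact Real.mul_self_sqrt (Nat.cast_nonneg n)
  have hsne : (Real.sqrt n : ℂ) ≠ 0 := by
    norm_cast
    positivity
  unfold dft1 dft2
  simp only [hr]
  rw [Finset.sum_comm]
  rw [Finset.mul_sum, Finset.mul_sum]
  refine Finset.sum_congr rfl fun x _ => ?_
  simp only [Finset.mul_sum, Finset.sum_mul]
  refine Finset.sum_congr rfl fun y _ => ?_
  have harg : (-2 * (Real.pi : ℂ) * I * ((x : ℂ) * (ω : ℂ)) / n) =
      (-2 * (Real.pi : ℂ) * I * (((0:ℕ) : ℂ) * (y : ℂ) + (ω : ℂ) * (x : ℂ)) / n) := by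
    push_cast; ring
  have hc : (1/(Real.sqrt n : ℂ)) * (1/(Real.sqrt n : ℂ)) = 1/(n:ℂ) := by
    rw [div_mul_div_comm, one_mul, hs]
  rw [harg, ← hc]
  ring
end

section
/- For odd slope k ∈ [0,2N), adjacent parallel discrete lines on (ℤ/2Nℤ)² satisfy |C₁(L^{2N}_{l,k}) − C₁(L^{2N}_{l+1,k})| = 2, where C₁ counts points in the quadrant set P₁ = ([0,N)×[0,N)) ∪ ([N,2N)×[N,2N)). -/
/-- The discrete line `L^{2N}_{l,k} = {(x,y) ∈ [0,2N)² : x + k·y ≡ l mod 2N}`,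
as a finite set of lattice points. -/
def lineNat (N l k : ℕ) : Finset (ℕ × ℕ) :=
  (Finset.range (2 * N) ×ˢ Finset.range (2 * N)).filter
    (fun q => (q.1 + k * q.2) % (2 * N) = l % (2 * N))

/-- Membership in the quadrant set `P₁ = ([0,N)×[0,N)) ∪ ([N,2N)×[N,2N))`. -/
def inP1 (N : ℕ) (q : ℕ × ℕ) : Prop :=
  (q.1 < N ∧ q.2 < N) ∨ (N ≤ q.1 ∧ N ≤ q.2)

instance (N : ℕ) : DecidablePred (inP1 N) := fun _ => by unfold inP1; infer_instance

/-- `C₁(L)`: the number of points of the line `L^{2N}_{l,k}` lying in `P₁`. -/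
def C1 (N l k : ℕ) : ℕ := ((lineNat N l k).filter (inP1 N)).card

/-!
Parametrize the line `L^{2N}_{l,k}` by its height `y`: its point at height `y` has abscissa
`x = l - k y` in `ZMod (2N)`, and passing from `l` to `l + 1` moves every point one step to the
right. Membership in `P₁` only changes when `x` crosses `N - 1 → N` or `2N - 1 → 0`, each crossing
contributing `±1`. Since `k` is a unit of `ZMod (2N)` each crossing happens at exactly one height,
and since `k N = N` in `ZMod (2N)` the two heights differ by `N`, so they lie in opposite halves
and their contributions have the same sign.
-/

def lineX (N l k y : ℕ) : ℕ := ((l - k * y : ZMod (2 * N))).val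

def jumpP1 (N x y : ℕ) : ℤ :=
  (if inP1 N (x, y) then 1 else 0) - if inP1 N ((x + 1) % (2 * N), y) then 1 else 0

lemma natCast_odd_mul_self (N : ℕ) {k : ℕ} (hk : Odd k) : (k * N : ZMod (2 * N)) = N := by
  obtain ⟨t, rfl⟩ := hk
  have h : ((2 * N : ℕ) : ZMod (2 * N)) = 0 := ZMod.natCast_self _
  push_cast at h ⊢
  linear_combination t * h

lemma add_mod_two_mul_lt_iff {N y : ℕ} (hy : y < 2 * N) : (y + N) % (2 * N) < N ↔ ¬y < N := by
  rcases lt_or_ge y N with h | h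
  · rw [Nat.mod_eq_of_lt (by omega)]
    omega
  · rw [Nat.mod_eq_sub_mod (by omega), Nat.mod_eq_of_lt (by omega)]
    omega

section Line

variable {N : ℕ} [NeZero N]

lemma lineX_lt (l k y : ℕ) : lineX N l k y < 2 * N := ZMod.val_lt _

lemma lineX_eq_iff {l k y x : ℕ} (hx : x < 2 * N) :
    lineX N l k y = x ↔ (x + k * y) % (2 * N) = l % (2 * N) := by
  rw [← ZMod.natCast_eq_natCast_iff', lineX,
    (ZMod.val_injective _).eq_iff' (ZMod.val_natCast_of_lt hx), Nat.cast_add, Nat.cast_mul,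
    sub_eq_iff_eq_add, eq_comm]

lemma mem_lineNat_iff {l k : ℕ} {q : ℕ × ℕ} :
    q ∈ lineNat N l k ↔ q.2 < 2 * N ∧ lineX N l k q.2 = q.1 := by
  simp only [lineNat, Finset.mem_filter, Finset.mem_product, Finset.mem_range]
  constructor
  · rintro ⟨⟨hx, hy⟩, h⟩
    exact ⟨hy, (lineX_eq_iff hx).2 h⟩
  · rintro ⟨hy, h⟩
    exact ⟨⟨h ▸ lineX_lt l k q.2, hy⟩, (lineX_eq_iff (h ▸ lineX_lt l k q.2)).1 h⟩

lemma lineNat_eq_image (l k : ℕ) :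
    lineNat N l k = (Finset.range (2 * N)).image fun y => (lineX N l k y, y) := by
  ext ⟨x, y⟩
  simp [mem_lineNat_iff, and_comm]

lemma C1_eq_card_filter (l k : ℕ) :
    C1 N l k = ((Finset.range (2 * N)).filter fun y => inP1 N (lineX N l k y, y)).card := by
  rw [C1, lineNat_eq_image, Finset.filter_image,
    Finset.card_image_of_injective _ fun a b h => (Prod.mk.inj h).2]

lemma lineX_succ_mod (l k y : ℕ) :
    lineX N ((l + 1) % (2 * N)) k y = (lineX N l k y + 1) % (2 * N) := by
  rw [lineX, lineX, ZMod.natCast_mod, ← ZMod.val_natCast]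
  push_cast [ZMod.natCast_zmod_val]
  ring_nf

lemma lineX_add_mod {k : ℕ} (hk : Odd k) (l y : ℕ) :
    lineX N l k ((y + N) % (2 * N)) = (lineX N l k y + N) % (2 * N) := by
  rw [lineX, lineX, ZMod.natCast_mod, ← ZMod.val_natCast]
  have h2N : ((2 * N : ℕ) : ZMod (2 * N)) = 0 := ZMod.natCast_self _
  push_cast [ZMod.natCast_zmod_val] at h2N ⊢
  congr 1
  linear_combination -natCast_odd_mul_self N hk - h2N

variable {k : ℕ} (hk : k.Coprime (2 * N))
include hk

lemma lineX_injOn (l : ℕ) : Set.InjOn (lineX N l k) (Set.Iio (2 * N)) := by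
  intro y hy y' hy' h
  have hky : (k * y : ZMod (2 * N)) = k * y' := by
    simpa [lineX, (ZMod.val_injective _).eq_iff] using h
  have hyy' := (ZMod.unitOfCoprime k hk).isUnit.mul_left_cancel hky
  rwa [ZMod.natCast_eq_natCast_iff', Nat.mod_eq_of_lt hy, Nat.mod_eq_of_lt hy'] at hyy'

lemma exists_lineX_eq (l : ℕ) {x : ℕ} (hx : x < 2 * N) :
    ∃ y < 2 * N, lineX N l k y = x := by
  refine ⟨(((k : ZMod (2 * N))⁻¹ * (l - x))).val, ZMod.val_lt _, ?_⟩
  rw [lineX, ZMod.natCast_zmod_val, ← mul_assoc, ZMod.coe_mul_inv_eq_one k hk, one_mul,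
    sub_sub_cancel, ZMod.val_natCast_of_lt hx]

end Line

section Jump

variable {N : ℕ}

lemma jumpP1_eq_zero {x : ℕ} (y : ℕ) (hx : x < 2 * N) (hN : x + 1 ≠ N) (h2N : x + 1 ≠ 2 * N) :
    jumpP1 N x y = 0 := by
  rw [jumpP1, Nat.mod_eq_of_lt (by omega)]
  simp only [inP1]
  split_ifs <;> omega

lemma jumpP1_pred (hN : 0 < N) (y : ℕ) :
    jumpP1 N (N - 1) y = if y < N then 1 else -1 := by
  rw [jumpP1, Nat.sub_add_cancel hN, Nat.mod_eq_of_lt (by omega)]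
  simp only [inP1]
  split_ifs <;> omega

lemma jumpP1_two_mul_pred (hN : 0 < N) (y : ℕ) :
    jumpP1 N (2 * N - 1) y = if y < N then -1 else 1 := by
  rw [jumpP1, Nat.sub_add_cancel (by omega), Nat.mod_self]
  simp only [inP1]
  split_ifs <;> omega

lemma C1_sub_C1_succ [NeZero N] (l k : ℕ) :
    (C1 N l k : ℤ) - C1 N ((l + 1) % (2 * N)) k =
      ∑ y ∈ Finset.range (2 * N), jumpP1 N (lineX N l k y) y := by
  simp only [C1_eq_card_filter, lineX_succ_mod, Finset.natCast_card_filter, jumpP1,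
    Finset.sum_sub_distrib]

end Jump

theorem adjacent_lines_quadrant_diff_general (n : ℕ) (N : ℕ) (hN : N = 2 ^ n)
    (l k : ℕ) (hkodd : Odd k) :
    |(C1 N l k : ℤ) - (C1 N ((l + 1) % (2 * N)) k : ℤ)| = 2 := by
  have hN0 : 0 < N := hN ▸ Nat.two_pow_pos n
  have : NeZero N := NeZero.of_pos hN0
  have hk : k.Coprime (2 * N) := by
    rw [hN, ← pow_succ']
    exact hkodd.coprime_two_right.pow_right _
  obtain ⟨y₁, hy₁, hx₁⟩ := exists_lineX_eq hk l (x := N - 1) (by omega)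
  set y₂ := (y₁ + N) % (2 * N)
  have hx₂ : lineX N l k y₂ = 2 * N - 1 := by
    rw [lineX_add_mod hkodd, hx₁, Nat.mod_eq_of_lt (by omega)]
    omega
  have hy₂_lt : y₂ < 2 * N := Nat.mod_lt _ (by omega)
  have hne : y₁ ≠ y₂ := fun h => by rw [h] at hx₁; omega
  rw [C1_sub_C1_succ, Finset.sum_eq_add y₁ y₂ hne _ (by simp [hy₁]) (by simp [hy₂_lt]), hx₁, hx₂,
    jumpP1_pred hN0, jumpP1_two_mul_pred hN0]
  · simp only [y₂, add_mod_two_mul_lt_iff hy₁]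
    split_ifs <;> norm_num
  · intro y hy hy_ne
    have hy := Finset.mem_range.1 hy
    refine jumpP1_eq_zero y (lineX_lt l k y) (fun h => hy_ne.1 ?_) (fun h => hy_ne.2 ?_)
    · exact lineX_injOn hk l hy hy₁ (by rw [hx₁]; omega)
    · exact lineX_injOn hk l hy hy₂_lt (by rw [hx₂]; omega)

/-- For odd slope `k`, adjacent parallel discrete lines on `(ℤ/2Nℤ)²` (with `N = 2^n`
a power of two) satisfy `|C₁(L^{2N}_{l,k}) − C₁(L^{2N}_{l+1,k})| = 2`, interception
`l+1` taken mod `2N`. -/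
theorem adjacent_lines_quadrant_diff (n : ℕ) (N : ℕ) (hN : N = 2 ^ n)
    (l k : ℕ) (hl : l < 2 * N) (hk : k < 2 * N) (hkodd : Odd k) :
    |(C1 N l k : ℤ) - (C1 N ((l + 1) % (2 * N)) k : ℤ)| = 2 :=
  adjacent_lines_quadrant_diff_general n N hN l k hkodd
end
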